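/- arXiv:2402.16495 — 5 statements merged into one kernel-verified Lean document; each statement's English description precedes it below -/
import Mathlib

section
/- Let (𝔤, 𝔥, ρ, ψ) be a matched pair of Lie algebras. Then the direct sum 𝔤 ⊕ 𝔥 carries a Lie algebra structure (the bicrossed product) with bracket [(x,h),(y,k)] = ([x,y]_𝔤 + ψ_h y − ψ_k x, [h,k]_𝔥 + ρ_x k − ρ_y h). -/
/-- A bilinear map given as a plain two-argument function. -/
def Bilin (k : Type*) [Field k] {A B C : Type*} [AddCommGroup A] [Module k A]
    [AddCommGroup B] [Module k B] [AddCommGroup C] [Module k C] (f : A → B → C) : Prop :=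
  (∀ a a' b, f (a + a') b = f a b + f a' b) ∧
  (∀ (c : k) (a : A) (b : B), f (c • a) b = c • f a b) ∧
  (∀ a b b', f a (b + b') = f a b + f a b') ∧
  (∀ (c : k) (a : A) (b : B), f a (c • b) = c • f a b)

/-- A Lie algebra structure on `A`, given by a bilinear, alternating bracket
satisfying the Jacobi identity. -/
def IsLieBracketP (k : Type*) [Field k] {A : Type*} [AddCommGroup A] [Module k A]
    (μ : A → A → A) : Prop :=
  Bilin k μ ∧ (∀ x, μ x x = 0) ∧
  (∀ x y z, μ (μ x y) z + μ (μ y z) x + μ (μ z x) y = 0)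

/-- `ρ` is a representation (action map) of the Lie algebra `(A, μ)` on `B`. -/
def IsRepP (k : Type*) [Field k] {A B : Type*} [AddCommGroup A] [Module k A]
    [AddCommGroup B] [Module k B] (μ : A → A → A) (ρ : A → B → B) : Prop :=
  Bilin k ρ ∧ ∀ x y h, ρ (μ x y) h = ρ x (ρ y h) - ρ y (ρ x h)

/-- A matched pair of Lie algebras `(𝔤, 𝔥, ρ, ψ)`. -/
def IsMatchedPairP (k : Type*) [Field k] {G H : Type*} [AddCommGroup G] [Module k G]
    [AddCommGroup H] [Module k H]
    (μ : G → G → G) (ν : H → H → H) (ρ : G → H → H) (ψ : H → G → G) : Prop :=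
  IsLieBracketP k μ ∧ IsLieBracketP k ν ∧ IsRepP k μ ρ ∧ IsRepP k ν ψ ∧
  (∀ x h h', ρ x (ν h h') = ν (ρ x h) h' + ν h (ρ x h') + ρ (ψ h' x) h - ρ (ψ h x) h') ∧
  (∀ h x y, ψ h (μ x y) = μ (ψ h x) y + μ x (ψ h y) + ψ (ρ y h) x - ψ (ρ x h) y)

/-- The bicrossed product bracket on `G × H` associated with the data `(μ, ν, ρ, ψ)`. -/
def bicross {G H : Type*} [AddCommGroup G] [AddCommGroup H]
    (μ : G → G → G) (ν : H → H → H) (ρ : G → H → H) (ψ : H → G → G) :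
    G × H → G × H → G × H :=
  fun a b => (μ a.1 b.1 + ψ a.2 b.1 - ψ b.2 a.1, ν a.2 b.2 + ρ a.1 b.2 - ρ b.1 a.2)


/-! Bilinearity and the alternating property of the bicrossed bracket hold componentwise.
For the Jacobi identity, swapping the factors turns the bicrossed bracket of `(μ, ν, ρ, ψ)` on
`G × H` into that of `(ν, μ, ψ, ρ)` on `H × G`, and the matched-pair axioms are invariant under this
exchange, so only the `G`-component needs checking. There the Jacobi identity of `μ`, the
representation property of `ψ` and the compatibility condition for `ψ` cancel every term. -/

namespace Bilin

variable {k : Type*} [Field k] {A B C : Type*} [AddCommGroup A] [Module k A]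
  [AddCommGroup B] [Module k B] [AddCommGroup C] [Module k C] {f : A → B → C}

def toLinearMap₂ (hf : Bilin k f) : A →ₗ[k] B →ₗ[k] C :=
  LinearMap.mk₂ k f hf.1 hf.2.1 hf.2.2.1 hf.2.2.2

theorem map_sub_left (hf : Bilin k f) (a a' : A) (b : B) : f (a - a') b = f a b - f a' b :=
  hf.toLinearMap₂.map_sub₂ a a' b

theorem map_sub_right (hf : Bilin k f) (a : A) (b b' : B) : f a (b - b') = f a b - f a b' :=
  (hf.toLinearMap₂ a).map_sub b b'

end Bilin

theorem IsLieBracketP.anticomm {k : Type*} [Field k] {A : Type*} [AddCommGroup A] [Module k A]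
    {μ : A → A → A} (hμ : IsLieBracketP k μ) (x y : A) : μ y x = -μ x y := by
  obtain ⟨⟨hadd_left, -, hadd_right, -⟩, halt, -⟩ := hμ
  have h := halt (x + y)
  rw [hadd_left, hadd_right, hadd_right, halt, halt, zero_add, add_zero] at h
  exact eq_neg_of_add_eq_zero_right h

section BicrossAdditive

variable {G H : Type*} [AddCommGroup G] [AddCommGroup H]
  {μ : G → G → G} {ν : H → H → H} {ρ : G → H → H} {ψ : H → G → G}

theorem bicross_swap (a b : G × H) :
    bicross ν μ ψ ρ a.swap b.swap = (bicross μ ν ρ ψ a b).swap :=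
  rfl

theorem bicross_self (hμ : ∀ x, μ x x = 0) (hν : ∀ h, ν h h = 0) (a : G × H) :
    bicross μ ν ρ ψ a a = 0 := by
  simp [bicross, hμ, hν]

end BicrossAdditive

section Bicross

variable {k : Type*} [Field k] {G H : Type*} [AddCommGroup G] [Module k G]
  [AddCommGroup H] [Module k H]
  {μ : G → G → G} {ν : H → H → H} {ρ : G → H → H} {ψ : H → G → G}

theorem IsMatchedPairP.symm (hmp : IsMatchedPairP k μ ν ρ ψ) : IsMatchedPairP k ν μ ψ ρ :=
  let ⟨hμ, hν, hρ, hψ, hcρ, hcψ⟩ := hmp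
  ⟨hν, hμ, hψ, hρ, hcψ, hcρ⟩

theorem bicross_bilin (hμ : Bilin k μ) (hν : Bilin k ν) (hρ : Bilin k ρ) (hψ : Bilin k ψ) :
    Bilin k (bicross μ ν ρ ψ) := by
  obtain ⟨μa₁, μs₁, μa₂, μs₂⟩ := hμ
  obtain ⟨νa₁, νs₁, νa₂, νs₂⟩ := hν
  obtain ⟨ρa₁, ρs₁, ρa₂, ρs₂⟩ := hρ
  obtain ⟨ψa₁, ψs₁, ψa₂, ψs₂⟩ := hψ
  refine ⟨fun a a' b => ?_, fun c a b => ?_, fun a b b' => ?_, fun c a b => ?_⟩ <;>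
    simp only [bicross, Prod.fst_add, Prod.snd_add, Prod.smul_fst, Prod.smul_snd, Prod.mk_add_mk,
      Prod.smul_mk, Prod.mk.injEq, smul_add, smul_sub, μa₁, μs₁, μa₂, μs₂, νa₁, νs₁, νa₂, νs₂,
      ρa₁, ρs₁, ρa₂, ρs₂, ψa₁, ψs₁, ψa₂, ψs₂] <;>
    constructor <;> abel

theorem bicross_jacobi_fst (hμ : IsLieBracketP k μ) (hψ : IsRepP k ν ψ)
    (hc : ∀ h x y, ψ h (μ x y) = μ (ψ h x) y + μ x (ψ h y) + ψ (ρ y h) x - ψ (ρ x h) y)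
    (a b c : G × H) :
    (bicross μ ν ρ ψ (bicross μ ν ρ ψ a b) c + bicross μ ν ρ ψ (bicross μ ν ρ ψ b c) a +
      bicross μ ν ρ ψ (bicross μ ν ρ ψ c a) b).1 = 0 := by
  obtain ⟨x, h⟩ := a
  obtain ⟨y, l⟩ := b
  obtain ⟨z, m⟩ := c
  simp only [bicross, Prod.fst_add, hμ.1.1, hμ.1.map_sub_left, hψ.1.1, hψ.1.map_sub_left,
    hψ.1.2.2.1, hψ.1.map_sub_right, hψ.2, hc]
  rw [eq_neg_of_add_eq_zero_right (hμ.2.2 x y z), hμ.anticomm (ψ m y) x, hμ.anticomm (ψ h z) y,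
    hμ.anticomm (ψ l x) z]
  abel

theorem bicross_jacobi (hmp : IsMatchedPairP k μ ν ρ ψ) (a b c : G × H) :
    bicross μ ν ρ ψ (bicross μ ν ρ ψ a b) c + bicross μ ν ρ ψ (bicross μ ν ρ ψ b c) a +
      bicross μ ν ρ ψ (bicross μ ν ρ ψ c a) b = 0 := by
  obtain ⟨hν, -, -, hρ, -, hcρ⟩ := hmp.symm
  obtain ⟨hμ, -, -, hψ, -, hcψ⟩ := hmp
  refine Prod.ext (bicross_jacobi_fst hμ hψ hcψ a b c) ?_
  simpa only [bicross_swap, ← Prod.swap_add, Prod.fst_swap, Prod.snd_zero] using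
    bicross_jacobi_fst (ρ := ψ) hν hρ hcρ a.swap b.swap c.swap

end Bicross

theorem bicrossed_product_is_lie_algebra_general
    (k : Type*) [Field k] {G H : Type*}
    [AddCommGroup G] [Module k G] [AddCommGroup H] [Module k H]
    (μ : G → G → G) (ν : H → H → H) (ρ : G → H → H) (ψ : H → G → G)
    (hmp : IsMatchedPairP k μ ν ρ ψ) :
    IsLieBracketP k (bicross μ ν ρ ψ) := by
  have hjacobi := bicross_jacobi hmp
  obtain ⟨⟨hμ, hμ_self, -⟩, ⟨hν, hν_self, -⟩, ⟨hρ, -⟩, ⟨hψ, -⟩, -⟩ := hmp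
  exact ⟨bicross_bilin hμ hν hρ hψ, bicross_self hμ_self hν_self, hjacobi⟩

/-- Let `(𝔤, 𝔥, ρ, ψ)` be a matched pair of Lie algebras. Then `𝔤 ⊕ 𝔥`
carries a Lie algebra structure (the bicrossed product) with bracket
`[(x,h),(y,k)] = ([x,y] + ψ_h y − ψ_k x, [h,k] + ρ_x k − ρ_y h)`. -/
theorem bicrossed_product_is_lie_algebra
    (k : Type*) [Field k] [CharZero k] {G H : Type*}
    [AddCommGroup G] [Module k G] [AddCommGroup H] [Module k H]
    (μ : G → G → G) (ν : H → H → H) (ρ : G → H → H) (ψ : H → G → G)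
    (hmp : IsMatchedPairP k μ ν ρ ψ) :
    IsLieBracketP k (bicross μ ν ρ ψ) :=
  bicrossed_product_is_lie_algebra_general k μ ν ρ ψ hmp
end

section
/- Let 𝔤 and 𝔥 be Lie algebras and suppose the direct sum 𝔤 ⊕ 𝔥 carries a Lie algebra structure for which 𝔤 ⊕ 0 and 0 ⊕ 𝔥 are Lie subalgebras. Define ρ_x h := pr₂[(x,0),(0,h)] and ψ_h x := pr₁[(0,h),(x,0)]. Then (𝔤, 𝔥, ρ, ψ) is a matched pair of Lie algebras, and the Lie bracket on 𝔤 ⊕ 𝔥 equals [(x,h),(y,k)] = ([x,y]_𝔤 + ψ_h y − ψ_k x, [h,k]_𝔥 + ρ_x k − ρ_y h). -/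
section Bilin

variable {k : Type*} [Field k] {A B C : Type*} [AddCommGroup A] [Module k A]
  [AddCommGroup B] [Module k B] [AddCommGroup C] [Module k C] {f : A → B → C}

def Bilin.toLinearMap₂_s1 (hf : Bilin k f) : A →ₗ[k] B →ₗ[k] C :=
  LinearMap.mk₂ k f hf.1 hf.2.1 hf.2.2.1 hf.2.2.2

theorem LinearMap.bilin (F : A →ₗ[k] B →ₗ[k] C) : Bilin k (fun a b => F a b) :=
  ⟨F.map_add₂, F.map_smul₂, fun a => (F a).map_add, fun c a => (F a).map_smul c⟩

theorem Bilin.map_zero_left (hf : Bilin k f) (b : B) : f 0 b = 0 :=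
  hf.toLinearMap₂_s1.map_zero₂ b

theorem Bilin.map_zero_right (hf : Bilin k f) (a : A) : f a 0 = 0 :=
  (hf.toLinearMap₂_s1 a).map_zero

theorem Bilin.map_neg_left (hf : Bilin k f) (a : A) (b : B) : f (-a) b = -f a b :=
  hf.toLinearMap₂_s1.map_neg₂ a b

theorem Bilin.map_neg_right (hf : Bilin k f) (a : A) (b : B) : f a (-b) = -f a b :=
  (hf.toLinearMap₂_s1 a).map_neg b

end Bilin

theorem IsLieBracketP.antisymm {k : Type*} [Field k] {A : Type*} [AddCommGroup A] [Module k A]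
    {μ : A → A → A} (hμ : IsLieBracketP k μ) (a b : A) : μ a b = -μ b a := by
  have h := hμ.2.1 (a + b)
  rw [hμ.1.1, hμ.1.2.2.1, hμ.1.2.2.1, hμ.2.1 a, hμ.2.1 b, zero_add, add_zero] at h
  exact eq_neg_of_add_eq_zero_left h

section Bicross

variable {k : Type*} [Field k] {G H : Type*} [AddCommGroup G] [Module k G]
  [AddCommGroup H] [Module k H]
  {μ : G → G → G} {ν : H → H → H} {ρ : G → H → H} {ψ : H → G → G}

theorem bicross_jacobi_inl_inl_inr (hμ : Bilin k μ) (hν : Bilin k ν) (hρ : Bilin k ρ)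
    (hψ : Bilin k ψ) (x y : G) (h : H) :
    let br := bicross μ ν ρ ψ
    br (br (x, 0) (y, 0)) (0, h) + br (br (y, 0) (0, h)) (x, 0) + br (br (0, h) (x, 0)) (y, 0) =
      (μ (ψ h x) y - μ (ψ h y) x + ψ (ρ y h) x - ψ (ρ x h) y - ψ h (μ x y),
        ρ (μ x y) h - (ρ x (ρ y h) - ρ y (ρ x h))) := by
  intro br
  simp only [br, bicross, hμ.map_zero_left, hμ.map_zero_right, hν.map_zero_left,
    hν.map_zero_right, hρ.map_zero_left, hρ.map_zero_right, hψ.map_zero_left,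
    hμ.map_neg_left, hρ.map_neg_right, hψ.map_neg_left, add_zero, zero_add, sub_zero,
    zero_sub, Prod.mk_add_mk]
  congr 1 <;> abel

theorem bicross_jacobi_inr_inr_inl (hμ : Bilin k μ) (hν : Bilin k ν) (hρ : Bilin k ρ)
    (hψ : Bilin k ψ) (h h' : H) (x : G) :
    let br := bicross μ ν ρ ψ
    br (br (0, h) (0, h')) (x, 0) + br (br (0, h') (x, 0)) (0, h) + br (br (x, 0) (0, h)) (0, h') =
      (ψ (ν h h') x - (ψ h (ψ h' x) - ψ h' (ψ h x)),
        ν (ρ x h) h' - ν (ρ x h') h + ρ (ψ h' x) h - ρ (ψ h x) h' - ρ x (ν h h')) := by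
  intro br
  simp only [br, bicross, hμ.map_zero_left, hμ.map_zero_right, hν.map_zero_left,
    hν.map_zero_right, hρ.map_zero_left, hψ.map_zero_left, hψ.map_zero_right,
    hν.map_neg_left, hρ.map_neg_left, hψ.map_neg_right, add_zero, zero_add, sub_zero,
    zero_sub, Prod.mk_add_mk]
  congr 1 <;> abel

theorem isMatchedPairP_of_isLieBracketP_bicross (hμ : IsLieBracketP k μ)
    (hν : IsLieBracketP k ν) (hρ : Bilin k ρ) (hψ : Bilin k ψ)
    (hbr : IsLieBracketP k (bicross μ ν ρ ψ)) : IsMatchedPairP k μ ν ρ ψ := by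
  have jac₁ (x y : G) (h : H) := (bicross_jacobi_inl_inl_inr hμ.1 hν.1 hρ hψ x y h).symm.trans
    (hbr.2.2 (x, 0) (y, 0) (0, h))
  have jac₂ (h h' : H) (x : G) := (bicross_jacobi_inr_inr_inl hμ.1 hν.1 hρ hψ h h' x).symm.trans
    (hbr.2.2 (0, h) (0, h') (x, 0))
  simp only [Prod.mk_eq_zero, sub_eq_zero] at jac₁ jac₂
  refine ⟨hμ, hν, ⟨hρ, fun x y h => (jac₁ x y h).2⟩, ⟨hψ, fun h h' x => (jac₂ h h' x).1⟩,
    fun x h h' => ?_, fun h x y => ?_⟩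
  · rw [← (jac₂ h h' x).2, hν.antisymm h]; abel
  · rw [← (jac₁ x y h).1, hμ.antisymm x]; abel

end Bicross

section DirectSum

variable {k : Type*} [Field k] {G H : Type*} [AddCommGroup G] [Module k G]
  [AddCommGroup H] [Module k H] {br : G × H → G × H → G × H}

def leftAction (br : G × H → G × H → G × H) : G → H → H := fun x h => (br (x, 0) (0, h)).2

def rightAction (br : G × H → G × H → G × H) : H → G → G := fun h x => (br (0, h) (x, 0)).1

theorem Bilin.leftAction (hbr : Bilin k br) : Bilin k (leftAction br) :=
  ((hbr.toLinearMap₂_s1.comp (LinearMap.inl k G H)).compl₂ (LinearMap.inr k G H)).compr₂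
    (LinearMap.snd k G H) |>.bilin

theorem Bilin.rightAction (hbr : Bilin k br) : Bilin k (rightAction br) :=
  ((hbr.toLinearMap₂_s1.comp (LinearMap.inr k G H)).compl₂ (LinearMap.inl k G H)).compr₂
    (LinearMap.fst k G H) |>.bilin

theorem bracket_inl_inr (hbr : IsLieBracketP k br) (x : G) (h : H) :
    br (x, 0) (0, h) = (-rightAction br h x, leftAction br x h) := by
  refine Prod.ext ?_ rfl
  rw [hbr.antisymm]
  rfl

theorem bracket_inr_inl (hbr : IsLieBracketP k br) (h : H) (x : G) :
    br (0, h) (x, 0) = (rightAction br h x, -leftAction br x h) := by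
  refine Prod.ext rfl ?_
  rw [hbr.antisymm]
  rfl

theorem bracket_eq_bicross {μ : G → G → G} {ν : H → H → H} (hbr : IsLieBracketP k br)
    (hsubG : ∀ x y : G, br (x, 0) (y, 0) = (μ x y, 0))
    (hsubH : ∀ h h' : H, br (0, h) (0, h') = (0, ν h h')) :
    br = bicross μ ν (leftAction br) (rightAction br) := by
  ext1 ⟨x, h⟩; ext1 ⟨y, h'⟩
  have hdecomp (x : G) (h : H) : ((x, h) : G × H) = (x, 0) + (0, h) := (Prod.fst_add_snd _).symm
  conv_lhs => rw [hdecomp x h, hdecomp y h', hbr.1.1, hbr.1.2.2.1, hbr.1.2.2.1,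
    hsubG, hsubH, bracket_inl_inr hbr, bracket_inr_inl hbr]
  simp only [bicross, Prod.mk_add_mk]
  congr 1 <;> abel

end DirectSum

theorem matched_pair_from_direct_sum_lie_structure_general
    (k : Type*) [Field k] {G H : Type*}
    [AddCommGroup G] [Module k G] [AddCommGroup H] [Module k H]
    (μ : G → G → G) (ν : H → H → H) (br : G × H → G × H → G × H)
    (hμ : IsLieBracketP k μ) (hν : IsLieBracketP k ν)
    (hbr : IsLieBracketP k br)
    (hsubG : ∀ x y : G, br (x, 0) (y, 0) = (μ x y, 0))
    (hsubH : ∀ h h' : H, br (0, h) (0, h') = (0, ν h h')) :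
    IsMatchedPairP k μ ν
      (fun x h => (br (x, 0) (0, h)).2) (fun h x => (br (0, h) (x, 0)).1) ∧
    ∀ a b : G × H,
      br a b =
        bicross μ ν (fun x h => (br (x, 0) (0, h)).2) (fun h x => (br (0, h) (x, 0)).1) a b := by
  have hbicross := bracket_eq_bicross hbr hsubG hsubH
  refine ⟨isMatchedPairP_of_isLieBracketP_bicross hμ hν hbr.1.leftAction hbr.1.rightAction ?_,
    fun a b => congrFun₂ hbicross a b⟩
  rwa [hbicross] at hbr

/-- If `𝔤 ⊕ 𝔥` carries a Lie algebra structure for which `𝔤` and `𝔥` are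
Lie subalgebras, then with `ρ_x h := pr₂[(x,0),(0,h)]` and `ψ_h x := pr₁[(0,h),(x,0)]`, the
quadruple `(𝔤, 𝔥, ρ, ψ)` is a matched pair of Lie algebras, and the bracket on `𝔤 ⊕ 𝔥` is
the bicrossed product bracket. -/
theorem matched_pair_from_direct_sum_lie_structure
    (k : Type*) [Field k] [CharZero k] {G H : Type*}
    [AddCommGroup G] [Module k G] [AddCommGroup H] [Module k H]
    (μ : G → G → G) (ν : H → H → H) (br : G × H → G × H → G × H)
    (hμ : IsLieBracketP k μ) (hν : IsLieBracketP k ν)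
    (hbr : IsLieBracketP k br)
    (hsubG : ∀ x y : G, br (x, 0) (y, 0) = (μ x y, 0))
    (hsubH : ∀ h h' : H, br (0, h) (0, h') = (0, ν h h')) :
    IsMatchedPairP k μ ν
      (fun x h => (br (x, 0) (0, h)).2) (fun h x => (br (0, h) (x, 0)).1) ∧
    ∀ a b : G × H,
      br a b =
        bicross μ ν (fun x h => (br (x, 0) (0, h)).2) (fun h x => (br (0, h) (x, 0)).1) a b :=
  matched_pair_from_direct_sum_lie_structure_general k μ ν br hμ hν hbr hsubG hsubH
end

section
/- Let (𝔤, 𝔥, ρ, ψ) be a matched pair of Lie algebras and (V, W, α, β) a representation of it. Then V ⊕ W is a representation of the bicrossed product Lie algebra 𝔤 ⋈ 𝔥 via (ρ_⋈)_{(x,h)}(v,w) = ((ρ_V)_x v + (ψ_V)_h v − β_w x, (ψ_W)_h w + (ρ_W)_x w − α_v h). -/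
/-- A representation `(V, W, α, β)` of a matched pair of Lie algebras `(𝔤, 𝔥, ρ, ψ)`:
`V, W` are representations of both `𝔤` and `𝔥`, and `α : V × 𝔥 → W`, `β : W × 𝔤 → V`
are pairing maps satisfying the six compatibility identities. -/
def IsMPRepP (k : Type*) [Field k] {G H V W : Type*} [AddCommGroup G] [Module k G]
    [AddCommGroup H] [Module k H] [AddCommGroup V] [Module k V] [AddCommGroup W] [Module k W]
    (μ : G → G → G) (ν : H → H → H) (ρ : G → H → H) (ψ : H → G → G)
    (ρV : G → V → V) (ψV : H → V → V) (ρW : G → W → W) (ψW : H → W → W)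
    (α : V → H → W) (β : W → G → V) : Prop :=
  IsRepP k μ ρV ∧ IsRepP k ν ψV ∧ IsRepP k μ ρW ∧ IsRepP k ν ψW ∧
  Bilin k α ∧ Bilin k β ∧
  (∀ x v h, α (ρV x v) h = ρW x (α v h) - α v (ρ x h)) ∧
  (∀ h w x, β (ψW h w) x = ψV h (β w x) - β w (ψ h x)) ∧
  (∀ x h w, ρW x (ψW h w) = ψW (ρ x h) w + ψW h (ρW x w) + α (β w x) h - ρW (ψ h x) w) ∧
  (∀ v h h', α v (ν h h') = - ψW h' (α v h) + ψW h (α v h') + α (ψV h' v) h - α (ψV h v) h') ∧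
  (∀ h x v, ψV h (ρV x v) = ρV (ψ h x) v + ρV x (ψV h v) + β (α v h) x - ψV (ρ x h) v) ∧
  (∀ w x y, β w (μ x y) = - ρV y (β w x) + ρV x (β w y) + β (ρW y w) x - β (ρW x w) y)

section BicrossAction

variable {k : Type*} [Field k] {G H V W : Type*}
  [AddCommGroup G] [Module k G] [AddCommGroup H] [Module k H]
  [AddCommGroup V] [Module k V] [AddCommGroup W] [Module k W]
  {μ : G → G → G} {ν : H → H → H} {ρ : G → H → H} {ψ : H → G → G}
  {ρV : G → V → V} {ψV : H → V → V} {ρW : G → W → W} {ψW : H → W → W}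
  {α : V → H → W} {β : W → G → V}

/-- The action `ρ_⋈` of `G ⋈ H` on `V × W`. -/
def bicrossAction (ρV : G → V → V) (ψV : H → V → V) (ρW : G → W → W) (ψW : H → W → W)
    (α : V → H → W) (β : W → G → V) (a : G × H) (p : V × W) : V × W :=
  (ρV a.1 p.1 + ψV a.2 p.1 - β p.2 a.1, ψW a.2 p.2 + ρW a.1 p.2 - α p.1 a.2)

theorem bilin_bicrossAction (hρV : Bilin k ρV) (hψV : Bilin k ψV) (hρW : Bilin k ρW)
    (hψW : Bilin k ψW) (hα : Bilin k α) (hβ : Bilin k β) :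
    Bilin k (bicrossAction ρV ψV ρW ψW α β) := by
  refine ⟨fun a a' p => ?_, fun c a p => ?_, fun a p p' => ?_, fun c a p => ?_⟩
  · simp only [bicrossAction, Prod.fst_add, Prod.snd_add, Prod.mk_add_mk, Prod.mk.injEq,
      hρV.1, hψV.1, hρW.1, hψW.1, hα.2.2.1, hβ.2.2.1]
    constructor <;> abel
  · simp only [bicrossAction, Prod.smul_fst, Prod.smul_snd, Prod.smul_mk,
      hρV.2.1, hψV.2.1, hρW.2.1, hψW.2.1, hα.2.2.2, hβ.2.2.2, smul_add, smul_sub]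
  · simp only [bicrossAction, Prod.fst_add, Prod.snd_add, Prod.mk_add_mk, Prod.mk.injEq,
      hρV.2.2.1, hψV.2.2.1, hρW.2.2.1, hψW.2.2.1, hα.1, hβ.1]
    constructor <;> abel
  · simp only [bicrossAction, Prod.smul_fst, Prod.smul_snd, Prod.smul_mk,
      hρV.2.2.2, hψV.2.2.2, hρW.2.2.2, hψW.2.2.2, hα.2.1, hβ.2.1, smul_add, smul_sub]

theorem bicrossAction_bicross_fst (hρV : IsRepP k μ ρV) (hψV : IsRepP k ν ψV) (hβ : Bilin k β)
    (hβψW : ∀ h w x, β (ψW h w) x = ψV h (β w x) - β w (ψ h x))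
    (hψVρV : ∀ h x v,
      ψV h (ρV x v) = ρV (ψ h x) v + ρV x (ψV h v) + β (α v h) x - ψV (ρ x h) v)
    (hβμ : ∀ w x y,
      β w (μ x y) = - ρV y (β w x) + ρV x (β w y) + β (ρW y w) x - β (ρW x w) y)
    (a b : G × H) (p : V × W) :
    (bicrossAction ρV ψV ρW ψW α β (bicross μ ν ρ ψ a b) p).1 =
      (bicrossAction ρV ψV ρW ψW α β a (bicrossAction ρV ψV ρW ψW α β b p) -
        bicrossAction ρV ψV ρW ψW α β b (bicrossAction ρV ψV ρW ψW α β a p)).1 := by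
  obtain ⟨x, h⟩ := a
  obtain ⟨y, h'⟩ := b
  obtain ⟨v, w⟩ := p
  simp only [bicrossAction, bicross, Prod.fst_sub,
    hρV.1.1, hρV.1.2.2.1, hρV.1.map_sub_left, hρV.1.map_sub_right,
    hψV.1.1, hψV.1.2.2.1, hψV.1.map_sub_left, hψV.1.map_sub_right,
    hβ.1, hβ.2.2.1, hβ.map_sub_left, hβ.map_sub_right, hρV.2, hψV.2, hβψW, hψVρV, hβμ]
  abel

theorem bicrossAction_bicross_snd (hρW : IsRepP k μ ρW) (hψW : IsRepP k ν ψW) (hα : Bilin k α)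
    (hαρV : ∀ x v h, α (ρV x v) h = ρW x (α v h) - α v (ρ x h))
    (hρWψW : ∀ x h w,
      ρW x (ψW h w) = ψW (ρ x h) w + ψW h (ρW x w) + α (β w x) h - ρW (ψ h x) w)
    (hαν : ∀ v h h',
      α v (ν h h') = - ψW h' (α v h) + ψW h (α v h') + α (ψV h' v) h - α (ψV h v) h')
    (a b : G × H) (p : V × W) :
    (bicrossAction ρV ψV ρW ψW α β (bicross μ ν ρ ψ a b) p).2 =
      (bicrossAction ρV ψV ρW ψW α β a (bicrossAction ρV ψV ρW ψW α β b p) -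
        bicrossAction ρV ψV ρW ψW α β b (bicrossAction ρV ψV ρW ψW α β a p)).2 := by
  obtain ⟨x, h⟩ := a
  obtain ⟨y, h'⟩ := b
  obtain ⟨v, w⟩ := p
  simp only [bicrossAction, bicross, Prod.snd_sub,
    hρW.1.1, hρW.1.2.2.1, hρW.1.map_sub_left, hρW.1.map_sub_right,
    hψW.1.1, hψW.1.2.2.1, hψW.1.map_sub_left, hψW.1.map_sub_right,
    hα.1, hα.2.2.1, hα.map_sub_left, hα.map_sub_right, hρW.2, hψW.2, hαρV, hρWψW, hαν]
  abel

end BicrossAction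

theorem bicrossed_product_representation_general
    (k : Type*) [Field k] {G H V W : Type*}
    [AddCommGroup G] [Module k G] [AddCommGroup H] [Module k H]
    [AddCommGroup V] [Module k V] [AddCommGroup W] [Module k W]
    (μ : G → G → G) (ν : H → H → H) (ρ : G → H → H) (ψ : H → G → G)
    (ρV : G → V → V) (ψV : H → V → V) (ρW : G → W → W) (ψW : H → W → W)
    (α : V → H → W) (β : W → G → V)
    (hrep : IsMPRepP k μ ν ρ ψ ρV ψV ρW ψW α β) :
    IsRepP k (bicross μ ν ρ ψ)
      (fun (a : G × H) (p : V × W) =>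
        (ρV a.1 p.1 + ψV a.2 p.1 - β p.2 a.1, ψW a.2 p.2 + ρW a.1 p.2 - α p.1 a.2)) := by
  obtain ⟨hρV, hψV, hρW, hψW, hα, hβ, hαρV, hβψW, hρWψW, hαν, hψVρV, hβμ⟩ := hrep
  refine ⟨bilin_bicrossAction hρV.1 hψV.1 hρW.1 hψW.1 hα hβ, fun a b p => Prod.ext ?_ ?_⟩
  · exact bicrossAction_bicross_fst hρV hψV hβ hβψW hψVρV hβμ a b p
  · exact bicrossAction_bicross_snd hρW hψW hα hαρV hρWψW hαν a b p

/-- If `(V, W, α, β)` is a representation of a matched pair of Lie algebras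
`(𝔤, 𝔥, ρ, ψ)`, then `V ⊕ W` is a representation of the bicrossed product Lie algebra
`𝔤 ⋈ 𝔥` via `(ρ_⋈)_{(x,h)}(v,w) = ((ρ_V)_x v + (ψ_V)_h v − β_w x, (ψ_W)_h w + (ρ_W)_x w − α_v h)`. -/
theorem bicrossed_product_representation
    (k : Type*) [Field k] [CharZero k] {G H V W : Type*}
    [AddCommGroup G] [Module k G] [AddCommGroup H] [Module k H]
    [AddCommGroup V] [Module k V] [AddCommGroup W] [Module k W]
    (μ : G → G → G) (ν : H → H → H) (ρ : G → H → H) (ψ : H → G → G)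
    (ρV : G → V → V) (ψV : H → V → V) (ρW : G → W → W) (ψW : H → W → W)
    (α : V → H → W) (β : W → G → V)
    (hmp : IsMatchedPairP k μ ν ρ ψ)
    (hrep : IsMPRepP k μ ν ρ ψ ρV ψV ρW ψW α β) :
    IsRepP k (bicross μ ν ρ ψ)
      (fun (a : G × H) (p : V × W) =>
        (ρV a.1 p.1 + ψV a.2 p.1 - β p.2 a.1, ψW a.2 p.2 + ρW a.1 p.2 - α p.1 a.2)) :=
  bicrossed_product_representation_general k μ ν ρ ψ ρV ψV ρW ψW α β hrep
end

section
/- Let (𝔤, 𝔥, ρ, ψ) be a matched pair of Lie algebras and (V, W, α, β) a representation of it. Define α*: W* × 𝔥 → V* and β*: V* × 𝔤 → W* by (α*_p h)(v) = −p(α_v h) and (β*_q x)(w) = −q(β_w x), and let 𝔤 and 𝔥 act on V* and W* by the dual (contragredient) actions. Then (W*, V*, α*, β*) is a representation of the matched pair (𝔤, 𝔥, ρ, ψ). -/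
open Module

/-! Each identity for `(W*, V*, α*, β*)`, evaluated at a vector, is one of the identities for
`(V, W, α, β)` paired with a covector: the transpose reverses the order of composition, and the
signs in the dual actions and pairings turn this reversal back into the original identity.
Only the two identities for a `𝔥`-action applied after a `𝔤`-action (and vice versa) trade places. -/

section Dualization

variable {k : Type*} [Field k] {X Y U U' : Type*}
  [AddCommGroup X] [Module k X] [AddCommGroup Y] [Module k Y]
  [AddCommGroup U] [Module k U] [AddCommGroup U'] [Module k U']

def dualAction (a : X →ₗ[k] U →ₗ[k] U) : X → Dual k U → Dual k U :=
  fun x q => -((a x).dualMap q)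

def dualPairing (γ : U →ₗ[k] Y →ₗ[k] U') : Dual k U' → Y → Dual k U :=
  fun q y => -((γ.flip y).dualMap q)

@[simp]
lemma dualAction_apply (a : X →ₗ[k] U →ₗ[k] U) (x : X) (q : Dual k U) (u : U) :
    dualAction a x q u = -q (a x u) :=
  rfl

@[simp]
lemma dualPairing_apply (γ : U →ₗ[k] Y →ₗ[k] U') (q : Dual k U') (y : Y) (u : U) :
    dualPairing γ q y u = -q (γ u y) :=
  rfl

lemma bilin_dualAction (a : X →ₗ[k] U →ₗ[k] U) : Bilin k (dualAction a) := by
  refine ⟨fun x x' q => ?_, fun c x q => ?_, fun x q q' => ?_, fun c x q => ?_⟩ <;>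
    ext u <;> simp <;> ring

lemma bilin_dualPairing (γ : U →ₗ[k] Y →ₗ[k] U') : Bilin k (dualPairing γ) := by
  refine ⟨fun q q' y => ?_, fun c q y => ?_, fun q y y' => ?_, fun c q y => ?_⟩ <;>
    ext u <;> simp <;> ring

lemma IsRepP.dualAction {μ : X → X → X} {a : X →ₗ[k] U →ₗ[k] U}
    (ha : IsRepP k μ fun x u => a x u) : IsRepP k μ (dualAction a) := by
  refine ⟨bilin_dualAction a, fun x x' q => ?_⟩
  ext u
  simp [ha.2]

lemma dualPairing_dualAction {a : X →ₗ[k] U →ₗ[k] U} {a' : X →ₗ[k] U' →ₗ[k] U'}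
    {γ : U →ₗ[k] Y →ₗ[k] U'} {r : X → Y → Y}
    (h : ∀ x u y, γ (a x u) y = a' x (γ u y) - γ u (r x y)) (x : X) (q : Dual k U') (y : Y) :
    dualPairing γ (dualAction a' x q) y =
      dualAction a x (dualPairing γ q y) - dualPairing γ q (r x y) := by
  ext u
  simp [h]

lemma dualAction_dualAction {a : X →ₗ[k] U →ₗ[k] U} {b : Y →ₗ[k] U →ₗ[k] U}
    {γ : U →ₗ[k] Y →ₗ[k] U'} {δ : U' →ₗ[k] X →ₗ[k] U} {r : X → Y → Y} {s : Y → X → X}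
    (h : ∀ y x u, b y (a x u) = a (s y x) u + a x (b y u) + δ (γ u y) x - b (r x y) u)
    (x : X) (y : Y) (q : Dual k U) :
    dualAction a x (dualAction b y q) =
      dualAction b (r x y) q + dualAction b y (dualAction a x q) +
        dualPairing γ (dualPairing δ q x) y - dualAction a (s y x) q := by
  ext u
  simp [h]
  ring

lemma dualPairing_bracket {a : Y →ₗ[k] U →ₗ[k] U} {b : Y →ₗ[k] U' →ₗ[k] U'}
    {γ : U →ₗ[k] Y →ₗ[k] U'} {ν : Y → Y → Y}
    (h : ∀ u y y', γ u (ν y y') = -b y' (γ u y) + b y (γ u y') + γ (a y' u) y - γ (a y u) y')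
    (q : Dual k U') (y y' : Y) :
    dualPairing γ q (ν y y') =
      -dualAction a y' (dualPairing γ q y) + dualAction a y (dualPairing γ q y') +
        dualPairing γ (dualAction b y' q) y - dualPairing γ (dualAction b y q) y' := by
  ext u
  simp [h]
  ring

end Dualization

theorem dual_representation_of_matched_pair_general
    (k : Type*) [Field k] {G H V W : Type*}
    [AddCommGroup G] [Module k G] [AddCommGroup H] [Module k H]
    [AddCommGroup V] [Module k V] [AddCommGroup W] [Module k W]
    (μ : G → G → G) (ν : H → H → H) (ρ : G → H → H) (ψ : H → G → G)
    (ρV : G →ₗ[k] V →ₗ[k] V) (ψV : H →ₗ[k] V →ₗ[k] V)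
    (ρW : G →ₗ[k] W →ₗ[k] W) (ψW : H →ₗ[k] W →ₗ[k] W)
    (α : V →ₗ[k] H →ₗ[k] W) (β : W →ₗ[k] G →ₗ[k] V)
    (hrep : IsMPRepP k μ ν ρ ψ (fun x v => ρV x v) (fun h v => ψV h v)
      (fun x w => ρW x w) (fun h w => ψW h w) (fun v h => α v h) (fun w x => β w x)) :
    IsMPRepP k μ ν ρ ψ
      (fun (x : G) (p : Dual k W) => -((ρW x).dualMap p))
      (fun (h : H) (p : Dual k W) => -((ψW h).dualMap p))
      (fun (x : G) (q : Dual k V) => -((ρV x).dualMap q))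
      (fun (h : H) (q : Dual k V) => -((ψV h).dualMap q))
      (fun (p : Dual k W) (h : H) => -((α.flip h).dualMap p))
      (fun (q : Dual k V) (x : G) => -((β.flip x).dualMap q)) := by
  obtain ⟨hρV, hψV, hρW, hψW, -, -, hαρ, hβψ, hρψW, hαν, hψρV, hβμ⟩ := hrep
  exact ⟨hρW.dualAction, hψW.dualAction, hρV.dualAction, hψV.dualAction,
    bilin_dualPairing α, bilin_dualPairing β,
    dualPairing_dualAction hαρ, dualPairing_dualAction hβψ,
    dualAction_dualAction hψρV, dualPairing_bracket hαν,
    dualAction_dualAction hρψW, dualPairing_bracket hβμ⟩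

/-- Dual representation. If `(V, W, α, β)` is a representation of a matched
pair of Lie algebras `(𝔤, 𝔥, ρ, ψ)`, then `(W*, V*, α*, β*)`, with the dual
(contragredient) actions and `(α*_p h)(v) = −p(α_v h)`, `(β*_q x)(w) = −q(β_w x)`, is also a
representation of `(𝔤, 𝔥, ρ, ψ)`. -/
theorem dual_representation_of_matched_pair
    (k : Type*) [Field k] [CharZero k] {G H V W : Type*}
    [AddCommGroup G] [Module k G] [AddCommGroup H] [Module k H]
    [AddCommGroup V] [Module k V] [AddCommGroup W] [Module k W]
    (μ : G → G → G) (ν : H → H → H) (ρ : G → H → H) (ψ : H → G → G)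
    (ρV : G →ₗ[k] V →ₗ[k] V) (ψV : H →ₗ[k] V →ₗ[k] V)
    (ρW : G →ₗ[k] W →ₗ[k] W) (ψW : H →ₗ[k] W →ₗ[k] W)
    (α : V →ₗ[k] H →ₗ[k] W) (β : W →ₗ[k] G →ₗ[k] V)
    (hmp : IsMatchedPairP k μ ν ρ ψ)
    (hrep : IsMPRepP k μ ν ρ ψ (fun x v => ρV x v) (fun h v => ψV h v)
      (fun x w => ρW x w) (fun h w => ψW h w) (fun v h => α v h) (fun w x => β w x)) :
    IsMPRepP k μ ν ρ ψ
      (fun (x : G) (p : Dual k W) => -((ρW x).dualMap p))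
      (fun (h : H) (p : Dual k W) => -((ψW h).dualMap p))
      (fun (x : G) (q : Dual k V) => -((ρV x).dualMap q))
      (fun (h : H) (q : Dual k V) => -((ψV h).dualMap q))
      (fun (p : Dual k W) (h : H) => -((α.flip h).dualMap p))
      (fun (q : Dual k V) (x : G) => -((β.flip x).dualMap q)) :=
  dual_representation_of_matched_pair_general k μ ν ρ ψ ρV ψV ρW ψW α β hrep
end

section
/- Let (𝒢, {μ_k}_{k≥1}) be an L_∞-algebra and ℛ: 𝒢 → 𝒢 a strict Rota-Baxter operator of weight 1. Then the diagonal 𝒢_diag = {(x,x) : x ∈ 𝒢} and the graph 𝒢_ℛ = {(ℛ(x), x + ℛ(x)) : x ∈ 𝒢} are both L_∞-subalgebras of the direct product L_∞-algebra (𝒢 ⊕ 𝒢, {μ_k ⊕ μ_k}), and 𝒢 ⊕ 𝒢 = 𝒢_diag ⊕ 𝒢_ℛ as graded vector spaces. -/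
/-!
Expanding `μₙ(x₁ + ℛx₁, …, xₙ + ℛxₙ)` by multilinearity gives `μₙ(ℛx₁, …, ℛxₙ)` plus the sum of
all terms with at least one undecorated argument; the Rota-Baxter identity says the first term is
`ℛ` of that sum `a`, so the image of the graph is `(ℛa, a + ℛa)`. The decomposition
`(p₁, p₂) = (a, a) + (ℛb, b + ℛb)` forces `b = p₂ - p₁` and `a = p₁ - ℛb`.
-/

/-- `f : 𝒢^k → 𝒢` is multilinear. -/
def IsMultilin (k : Type*) [Field k] {G : Type*} [AddCommGroup G] [Module k G]
    (n : ℕ) (f : (Fin n → G) → G) : Prop :=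
  (∀ (x : Fin n → G) (i : Fin n) (a b : G),
      f (Function.update x i (a + b)) = f (Function.update x i a) + f (Function.update x i b)) ∧
  (∀ (x : Fin n → G) (i : Fin n) (c : k) (a : G),
      f (Function.update x i (c • a)) = c • f (Function.update x i a))

open scoped Classical in
/-- `ℛ` is a strict Rota-Baxter operator of weight `1` on the `L_∞`-algebra
`(𝒢, {μ_k})`: for all `k ≥ 1`,
`μ_k(ℛx₁,…,ℛx_k) = ℛ(Σ_{∅ ≠ S ⊆ {1,…,k}} μ_k(…)), ` where in the summand for `S` the
arguments in positions of `S` are undecorated and all others carry `ℛ`. -/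
def IsStrictRotaBaxterWeightOne (k : Type*) [Field k] {G : Type*}
    [AddCommGroup G] [Module k G] (μ : ∀ n : ℕ, (Fin n → G) → G) (R : G →ₗ[k] G) : Prop :=
  ∀ (n : ℕ) (x : Fin n → G),
    μ n (fun i => R (x i)) =
      R (∑ S ∈ Finset.univ.powerset.filter (fun S : Finset (Fin n) => S.Nonempty),
          μ n (fun i => if i ∈ S then x i else R (x i)))

namespace IsMultilin

variable {k : Type*} [Field k] {G : Type*} [AddCommGroup G] [Module k G]
  {n : ℕ} {f : (Fin n → G) → G}

def toMultilinearMap (hf : IsMultilin k n f) : MultilinearMap k (fun _ : Fin n => G) G where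
  toFun := f
  map_update_add' x i a b := by convert hf.1 x i a b
  map_update_smul' x i c a := by convert hf.2 x i c a

open scoped Classical in
theorem map_add_eq_add_sum_nonempty (hf : IsMultilin k n f) (x y : Fin n → G) :
    f (fun i => x i + y i) =
      f y + ∑ S ∈ Finset.univ.powerset.filter (fun S : Finset (Fin n) => S.Nonempty),
        f (fun i => if i ∈ S then x i else y i) := by
  have hexpand : f (fun i => x i + y i) =
      ∑ S ∈ Finset.univ.powerset, f (fun i => if i ∈ S then x i else y i) := by
    rw [Finset.powerset_univ]
    exact hf.toMultilinearMap.map_add_univ x y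
  rw [hexpand, ← Finset.sum_filter_not_add_sum_filter _ (fun S : Finset (Fin n) => S.Nonempty)]
  simp [Finset.not_nonempty_iff_eq_empty, Finset.filter_eq']

end IsMultilin

theorem IsStrictRotaBaxterWeightOne.exists_map_graph_eq_graph {k : Type*} [Field k] {G : Type*}
    [AddCommGroup G] [Module k G] {μ : ∀ n : ℕ, (Fin n → G) → G} {R : G →ₗ[k] G}
    (hmult : ∀ n, IsMultilin k n (μ n)) (hRB : IsStrictRotaBaxterWeightOne k μ R)
    (n : ℕ) (x : Fin n → G) :
    ∃ a : G, μ n (fun i => R (x i)) = R a ∧ μ n (fun i => x i + R (x i)) = a + R a := by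
  classical
  refine ⟨_, hRB n x, ?_⟩
  rw [(hmult n).map_add_eq_add_sum_nonempty, hRB n x, add_comm]

theorem Prod.eq_diag_add_graph_iff {G : Type*} [AddCommGroup G] (R : G → G) (p : G × G)
    (a b : G) :
    p = ((a, a) : G × G) + (R b, b + R b) ↔ b = p.2 - p.1 ∧ a = p.1 - R (p.2 - p.1) := by
  constructor
  · rintro rfl
    simp
  · rintro ⟨rfl, rfl⟩
    ext <;> simp

theorem rota_baxter_diagonal_and_graph_subalgebras_general
    (k : Type*) [Field k] {G : Type*} [AddCommGroup G] [Module k G]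
    (μ : ∀ n : ℕ, (Fin n → G) → G)
    (hmult : ∀ n, IsMultilin k n (μ n))
    (R : G →ₗ[k] G)
    (hRB : IsStrictRotaBaxterWeightOne k μ R) :
    -- the diagonal is closed under all the structure maps `μ_k ⊕ μ_k`
    (∀ (n : ℕ) (x : Fin n → G),
        ∃ a : G, (μ n (fun i => ((x i, x i) : G × G).1), μ n (fun i => (x i, x i).2))
          = (a, a)) ∧
    -- the graph of `ℛ` is closed under all the structure maps `μ_k ⊕ μ_k`
    (∀ (n : ℕ) (x : Fin n → G),
        ∃ a : G, (μ n (fun i => ((R (x i), x i + R (x i)) : G × G).1),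
                  μ n (fun i => (R (x i), x i + R (x i)).2))
          = (R a, a + R a)) ∧
    -- `𝒢 ⊕ 𝒢 = 𝒢_diag ⊕ 𝒢_ℛ`: every element decomposes uniquely
    (∀ p : G × G, ∃ a b : G, p = ((a, a) : G × G) + (R b, b + R b) ∧
        ∀ a' b' : G, p = ((a', a') : G × G) + (R b', b' + R b') → a = a' ∧ b = b') := by
  refine ⟨fun n x => ⟨μ n x, rfl⟩, fun n x => ?_, fun p => ?_⟩
  · obtain ⟨a, hR, hgraph⟩ := hRB.exists_map_graph_eq_graph hmult n x
    exact ⟨a, Prod.ext hR hgraph⟩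
  · refine ⟨_, _, (Prod.eq_diag_add_graph_iff R p _ _).2 ⟨rfl, rfl⟩, fun a' b' h => ?_⟩
    obtain ⟨rfl, rfl⟩ := (Prod.eq_diag_add_graph_iff R p a' b').1 h
    exact ⟨rfl, rfl⟩

/-- Let `(𝒢, {μ_k}_{k≥1})` be an `L_∞`-algebra and `ℛ` a strict
Rota-Baxter operator of weight `1`. Then the diagonal `𝒢_diag = {(x,x)}` and the graph
`𝒢_ℛ = {(ℛx, x + ℛx)}` are both `L_∞`-subalgebras of the direct product
`(𝒢 ⊕ 𝒢, {μ_k ⊕ μ_k})`, and `𝒢 ⊕ 𝒢 = 𝒢_diag ⊕ 𝒢_ℛ` as graded vector spaces. -/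
theorem rota_baxter_diagonal_and_graph_subalgebras
    (k : Type*) [Field k] [CharZero k] {G : Type*} [AddCommGroup G] [Module k G]
    (μ : ∀ n : ℕ, (Fin n → G) → G)
    (hmult : ∀ n, IsMultilin k n (μ n))
    (R : G →ₗ[k] G)
    (hRB : IsStrictRotaBaxterWeightOne k μ R) :
    -- the diagonal is closed under all the structure maps `μ_k ⊕ μ_k`
    (∀ (n : ℕ) (x : Fin n → G),
        ∃ a : G, (μ n (fun i => ((x i, x i) : G × G).1), μ n (fun i => (x i, x i).2))
          = (a, a)) ∧
    -- the graph of `ℛ` is closed under all the structure maps `μ_k ⊕ μ_k`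
    (∀ (n : ℕ) (x : Fin n → G),
        ∃ a : G, (μ n (fun i => ((R (x i), x i + R (x i)) : G × G).1),
                  μ n (fun i => (R (x i), x i + R (x i)).2))
          = (R a, a + R a)) ∧
    -- `𝒢 ⊕ 𝒢 = 𝒢_diag ⊕ 𝒢_ℛ`: every element decomposes uniquely
    (∀ p : G × G, ∃ a b : G, p = ((a, a) : G × G) + (R b, b + R b) ∧
        ∀ a' b' : G, p = ((a', a') : G × G) + (R b', b' + R b') → a = a' ∧ b = b') :=
  rota_baxter_diagonal_and_graph_subalgebras_general k μ hmult R hRB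
end
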